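/- Consider the R-linear maps A : R³ → R³ defined by A(x,y,z) = (Q·x, V·x + Q·y, V·y + Q·z), and B : R³ → R³ defined by B(x,y,z) = (Q²·x, Q·V·x + Q²·y, V²·x + Q·V·y + Q²·z). Then ker(A) = range(B) and ker(B) = range(A); in particular A and B form a 2-periodic exact sequence of free R-modules. -/

import Mathlib

open Polynomial CategoryTheory

noncomputable section

/-- The field `F = ℤ/2ℤ`. -/
abbrev Fld := ZMod 2

/-- The polynomial ring `F[[V]][Q]` (polynomials in `Q` over the power series ring `F[[V]]`). -/
abbrev Rpoly := Polynomial (PowerSeries Fld)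

/-- The ring `R = F[[V]][Q]/(Q³)`. -/
abbrev Rring := Rpoly ⧸ Ideal.span ({(X : Rpoly) ^ 3} : Set Rpoly)

/-- `Q`, the image in `R` of the polynomial variable. -/
def Qe : Rring := Ideal.Quotient.mk (Ideal.span ({(X : Rpoly) ^ 3} : Set Rpoly)) (X : Rpoly)

/-- `V`, the image in `R` of the power series variable. -/
def Ve : Rring := Ideal.Quotient.mk (Ideal.span ({(X : Rpoly) ^ 3} : Set Rpoly)) (C PowerSeries.X)
/-- `A(x,y,z) = (Q·x, V·x + Q·y, V·y + Q·z)`. -/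
def A3 : (Rring × Rring × Rring) →ₗ[Rring] (Rring × Rring × Rring) where
  toFun p := (Qe * p.1, Ve * p.1 + Qe * p.2.1, Ve * p.2.1 + Qe * p.2.2)
  map_add' p q := by
    simp only [Prod.ext_iff, Prod.fst_add, Prod.snd_add, Prod.mk_add_mk]
    refine ⟨by ring, by ring, by ring⟩
  map_smul' r p := by
    simp only [Prod.ext_iff, Prod.smul_fst, Prod.smul_snd, Prod.smul_mk, smul_eq_mul,
      RingHom.id_apply]
    refine ⟨by ring, by ring, by ring⟩

/-- `B(x,y,z) = (Q²·x, Q·V·x + Q²·y, V²·x + Q·V·y + Q²·z)`. -/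
def B3 : (Rring × Rring × Rring) →ₗ[Rring] (Rring × Rring × Rring) where
  toFun p := (Qe ^ 2 * p.1, Qe * Ve * p.1 + Qe ^ 2 * p.2.1,
    Ve ^ 2 * p.1 + Qe * Ve * p.2.1 + Qe ^ 2 * p.2.2)
  map_add' p q := by
    simp only [Prod.ext_iff, Prod.fst_add, Prod.snd_add, Prod.mk_add_mk]
    refine ⟨by ring, by ring, by ring⟩
  map_smul' r p := by
    simp only [Prod.ext_iff, Prod.smul_fst, Prod.smul_snd, Prod.smul_mk, smul_eq_mul,
      RingHom.id_apply]
    refine ⟨by ring, by ring, by ring⟩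

/-!
Write `N(x, y, z) = (0, x, y)` for the shift, so that `A = Q + V N` and `B = Q² + Q (V N) + (V N)²`.
In characteristic two `A = Q - V N`, hence `A B = B A = Q³ - (V N)³ = 0` because `Q³ = 0` and
`N³ = 0`. Conversely, both maps are lower triangular, so an element of `ker A` (resp. `ker B`) is
written as `B p` (resp. `A p`) by solving for `p` coordinate by coordinate. This only uses that the
annihilator of `Q` in `R` is `Q² R` and that of `Q²` is `Q R`, which holds because `Q` is a
non-zero-divisor in `F[[V]][Q]`.
-/

theorem Polynomial.exists_eq_X_pow_mul_of_X_pow_mul_eq_zero {S : Type*} [CommRing S]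
    {k m n : ℕ} (hn : k + m = n) {w : S[X] ⧸ Ideal.span {(X : S[X]) ^ n}}
    (h : Ideal.Quotient.mk _ (X ^ k) * w = 0) : ∃ u, w = Ideal.Quotient.mk _ (X ^ m) * u := by
  obtain ⟨p, rfl⟩ := Ideal.Quotient.mk_surjective w
  rw [← map_mul, Ideal.Quotient.eq_zero_iff_mem, Ideal.mem_span_singleton] at h
  obtain ⟨t, ht⟩ := h
  refine ⟨Ideal.Quotient.mk _ t, ?_⟩
  rw [← map_mul]
  congr 1
  apply (isRegular_X_pow k).left
  simp only [ht, ← hn, pow_add, mul_assoc]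

lemma Qe_pow_three : Qe ^ 3 = 0 := by
  rw [Qe, ← map_pow, Ideal.Quotient.eq_zero_iff_mem]
  exact Ideal.mem_span_singleton_self _

lemma Rring_two_eq_zero : (2 : Rring) = 0 := by
  have h : (2 : Fld) = 0 := rfl
  simpa [h] using (map_ofNat (algebraMap Fld Rring) 2).symm

lemma exists_eq_Qe_sq_mul_of_Qe_mul_eq_zero {w : Rring} (h : Qe * w = 0) :
    ∃ u, w = Qe ^ 2 * u := by
  simpa [Qe] using Polynomial.exists_eq_X_pow_mul_of_X_pow_mul_eq_zero (k := 1) (m := 2) rfl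
    (by simpa [Qe] using h)

lemma exists_eq_Qe_mul_of_Qe_sq_mul_eq_zero {w : Rring} (h : Qe ^ 2 * w = 0) :
    ∃ u, w = Qe * u := by
  simpa [Qe] using Polynomial.exists_eq_X_pow_mul_of_X_pow_mul_eq_zero (k := 2) (m := 1) rfl
    (by simpa [Qe] using h)

lemma A3_apply (x y z : Rring) : A3 (x, y, z) = (Qe * x, Ve * x + Qe * y, Ve * y + Qe * z) := rfl

lemma B3_apply (x y z : Rring) :
    B3 (x, y, z) = (Qe ^ 2 * x, Qe * Ve * x + Qe ^ 2 * y, Ve ^ 2 * x + Qe * Ve * y + Qe ^ 2 * z) :=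
  rfl

lemma A3_comp_B3 : A3 ∘ₗ B3 = 0 := by
  refine LinearMap.ext fun ⟨x, y, z⟩ => ?_
  simp only [LinearMap.comp_apply, B3_apply, A3_apply, LinearMap.zero_apply, Prod.mk_eq_zero]
  refine ⟨?_, ?_, ?_⟩
  · linear_combination x * Qe_pow_three
  · linear_combination y * Qe_pow_three + Qe ^ 2 * Ve * x * Rring_two_eq_zero
  · linear_combination z * Qe_pow_three + (Qe * Ve ^ 2 * x + Qe ^ 2 * Ve * y) * Rring_two_eq_zero

lemma B3_comp_A3 : B3 ∘ₗ A3 = 0 := by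
  refine LinearMap.ext fun ⟨x, y, z⟩ => ?_
  simp only [LinearMap.comp_apply, B3_apply, A3_apply, LinearMap.zero_apply, Prod.mk_eq_zero]
  refine ⟨?_, ?_, ?_⟩
  · linear_combination x * Qe_pow_three
  · linear_combination y * Qe_pow_three + Qe ^ 2 * Ve * x * Rring_two_eq_zero
  · linear_combination z * Qe_pow_three + (Qe * Ve ^ 2 * x + Qe ^ 2 * Ve * y) * Rring_two_eq_zero

lemma ker_A3_le_range_B3 : LinearMap.ker A3 ≤ LinearMap.range B3 := by
  rintro ⟨x, y, z⟩ hp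
  simp only [LinearMap.mem_ker, A3_apply, Prod.mk_eq_zero] at hp
  obtain ⟨hx, hy, hz⟩ := hp
  obtain ⟨a, ha⟩ := exists_eq_Qe_sq_mul_of_Qe_mul_eq_zero hx
  obtain ⟨b, hb⟩ := exists_eq_Qe_sq_mul_of_Qe_mul_eq_zero (w := y + Qe * Ve * a)
    (by linear_combination hy - Ve * ha)
  obtain ⟨c, hc⟩ := exists_eq_Qe_sq_mul_of_Qe_mul_eq_zero (w := z + Ve ^ 2 * a + Qe * Ve * b)
    (by linear_combination hz - Ve * hb + Qe * Ve ^ 2 * a * Rring_two_eq_zero)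
  refine ⟨(a, b, c), ?_⟩
  simp only [B3_apply, Prod.mk.injEq]
  refine ⟨by linear_combination -ha, ?_, ?_⟩
  · linear_combination -hb + Qe * Ve * a * Rring_two_eq_zero
  · linear_combination -hc + (Ve ^ 2 * a + Qe * Ve * b) * Rring_two_eq_zero

lemma ker_B3_le_range_A3 : LinearMap.ker B3 ≤ LinearMap.range A3 := by
  rintro ⟨x, y, z⟩ hp
  simp only [LinearMap.mem_ker, B3_apply, Prod.mk_eq_zero] at hp
  obtain ⟨hx, hy, hz⟩ := hp
  obtain ⟨a, ha⟩ := exists_eq_Qe_mul_of_Qe_sq_mul_eq_zero hx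
  obtain ⟨b, hb⟩ := exists_eq_Qe_mul_of_Qe_sq_mul_eq_zero (w := y + Ve * a)
    (by linear_combination hy - Qe * Ve * ha)
  obtain ⟨c, hc⟩ := exists_eq_Qe_mul_of_Qe_sq_mul_eq_zero (w := z + Ve * b)
    (by linear_combination hz - Ve ^ 2 * ha - Qe * Ve * hb)
  refine ⟨(a, b, c), ?_⟩
  simp only [A3_apply, Prod.mk.injEq]
  refine ⟨by linear_combination -ha, ?_, ?_⟩
  · linear_combination -hb + Ve * a * Rring_two_eq_zero
  · linear_combination -hc + Ve * b * Rring_two_eq_zero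

/-- `ker A = range B` and `ker B = range A`; in particular `A` and `B` compose to
zero in either order, forming a 2-periodic exact sequence of free `R`-modules. -/
theorem stmt12 :
    LinearMap.ker A3 = LinearMap.range B3 ∧
    LinearMap.ker B3 = LinearMap.range A3 ∧
    A3 ∘ₗ B3 = 0 ∧ B3 ∘ₗ A3 = 0 :=
  ⟨ker_A3_le_range_B3.antisymm (LinearMap.range_le_ker_iff.mpr A3_comp_B3),
    ker_B3_le_range_A3.antisymm (LinearMap.range_le_ker_iff.mpr B3_comp_A3),
    A3_comp_B3, B3_comp_A3⟩
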